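/- Define f₀(x,y) = (xy+1)(x²−1)(x²−4). Then: (i) f₀(β,β) ≥ 0 for every β ∈ ℤ; (ii) f₀(α, α^τ) = 0 for every α ∈ A with α ≠ 0 (where α^τ = α for integer α, and α^τ is the ℚ(√5)-conjugate for α ∈ {±φ, ±φ^τ}); and (iii) f₀(0,0) = 4 > 0. -/
import Mathlib


noncomputable def phi : ℝ := (1 + Real.sqrt 5) / 2
noncomputable def phiTau : ℝ := (1 - Real.sqrt 5) / 2

/-- The conjugate pairs `(α, α^τ)` for `α ∈ A = {0, ±1, ±2, ±φ, ±φ^τ}`, where `τ` fixes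
the integers and swaps `φ ↔ φ^τ`. -/
noncomputable def conjPairs : Set (ℝ × ℝ) :=
  {(0, 0), (1, 1), (-1, -1), (2, 2), (-2, -2),
    (phi, phiTau), (-phi, -phiTau), (phiTau, phi), (-phiTau, -phi)}

/-- `f₀(x,y) = (xy+1)(x²-1)(x²-4)`. -/
def f0 (x y : ℝ) : ℝ := (x * y + 1) * (x ^ 2 - 1) * (x ^ 2 - 4)

lemma phi_mul_phiTau : phi * phiTau = -1 := by
  have h5 : Real.sqrt 5 ^ 2 = 5 := Real.sq_sqrt (by norm_num)
  unfold phi phiTau; nlinarith [h5]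

/-- (i) `f₀(β,β) ≥ 0` for all `β ∈ ℤ`; (ii) `f₀(α,α^τ) = 0` for all `α ∈ A` with `α ≠ 0`;
(iii) `f₀(0,0) = 4 > 0`. -/
theorem f0_properties :
    (∀ β : ℤ, 0 ≤ f0 (β : ℝ) (β : ℝ)) ∧
    (∀ p ∈ conjPairs, p.1 ≠ 0 → f0 p.1 p.2 = 0) ∧
    (f0 0 0 = 4 ∧ (0 : ℝ) < 4) := by
  refine ⟨?_, ?_, by norm_num [f0], by norm_num⟩
  · intro β
    have h : β ^ 2 ≤ 1 ∨ 4 ≤ β ^ 2 := by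
      rcases le_or_gt (β ^ 2) 1 with h | h
      · exact Or.inl h
      · right
        rcases le_or_gt 2 β with hb | hb
        · nlinarith
        · rcases le_or_gt β (-2) with hb' | hb'
          · nlinarith
          · interval_cases β <;> omega
    have ht0 : (0 : ℝ) ≤ (β : ℝ) ^ 2 := sq_nonneg _
    unfold f0
    rcases h with h | h
    · have h' : ((β : ℝ)) ^ 2 ≤ 1 := by exact_mod_cast (by exact_mod_cast h : ((β ^ 2 : ℤ) : ℝ) ≤ 1)
      nlinarith [mul_nonneg (by linarith : (0:ℝ) ≤ 1 - (β:ℝ)^2) (by linarith : (0:ℝ) ≤ 4 - (β:ℝ)^2)]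
    · have h' : (4 : ℝ) ≤ ((β : ℝ)) ^ 2 := by exact_mod_cast (by exact_mod_cast h : (4 : ℝ) ≤ ((β ^ 2 : ℤ) : ℝ))
      nlinarith [mul_nonneg (by linarith : (0:ℝ) ≤ (β:ℝ)^2 - 1) (by linarith : (0:ℝ) ≤ (β:ℝ)^2 - 4)]
  · intro p hp hne
    have hm := phi_mul_phiTau
    rcases hp with h | h | h | h | h | h | h | h | h <;> subst h <;>
      first
        | exact absurd rfl hne
        | (norm_num [f0]; exact Or.inl (Or.inl (by linear_combination hm)))
        | norm_num [f0]
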